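/- Let $V_i = V_i^1 \oplus V_i^2$ for $i=1,\dots,d$ with $d \geq 2$ be finite-dimensional vector spaces over a field. If $T_1 \in V_1^1 \otimes \cdots \otimes V_d^1$ and $T_2 \in V_1^2 \otimes \cdots \otimes V_d^2$, then the slice rank of $T_1 \oplus T_2$ (i.e., of $T_1 + T_2$ viewed inside $V_1 \otimes \cdots \otimes V_d$) equals the slice rank of $T_1$ plus the slice rank of $T_2$. -/

import Mathlib

open scoped TensorProduct BigOperators

/-- Slice rank of a tensor in a tensor product of vector spaces. -/
noncomputable def tensorSliceRank (F : Type*) [Field F] {d : ℕ} (V : Fin d → Type*)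
    [∀ i, AddCommGroup (V i)] [∀ i, Module F (V i)] (T : ⨂[F] i, V i) : ℕ :=
  sInf {r | ∃ S : Fin r → ⨂[F] i, V i,
    (∀ j, ∃ i : Fin d, ∃ u : V i,
      S j ∈ Submodule.span F {t | ∃ v : ∀ k, V k, v i = u ∧ t = PiTensorProduct.tprod F v}) ∧
    T = ∑ j, S j}

/-!
The slice rank of `T` is the least `∑ i, dim A i` over families of subspaces `A i ≤ V i` such
that `T` vanishes in `⨂ i, V i ⧸ A i`. Subadditivity and monotonicity under linear maps follow at
once and give `≤`.

For `≥`, take such `A` for `T₁ ⊕ T₂`. Fix a slot `s`; let `B s` be the projection of `A s` to `W₁ s`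
along `W₂ s`, and `B i = A i ∩ W₁ i` for `i ≠ s`. There are maps `V i → W₁ i ⧸ B i` extending the
quotient maps of `W₁ i`, killing `A i`, and at slot `s` also killing `W₂ s`; they send `T₁ ⊕ T₂`
to `0` and `T₂` to `0`, hence `T₁` to `0`. Exchanging the roles of projection and intersection
(projecting at every slot except `s`, one of which exists since `d ≥ 2`) gives `C` for `T₂`, and
`dim B i + dim C i = dim A i` at every slot by rank–nullity.
-/

section

variable {F E : Type*} [Field F] [AddCommGroup E] [Module F E]

theorem Submodule.exists_comp_subtype_eq_mkQ_comap (W A : Submodule F E) :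
    ∃ G : E →ₗ[F] W ⧸ A.comap W.subtype,
      G ∘ₗ W.subtype = (A.comap W.subtype).mkQ ∧ A ≤ LinearMap.ker G := by
  set ι := (A.comap W.subtype).mapQ A W.subtype le_rfl
  have hι : LinearMap.ker ι = ⊥ := by rw [Submodule.ker_mapQ, Submodule.mkQ_map_self]
  obtain ⟨L, hL⟩ := ι.exists_leftInverse_of_injective hι
  refine ⟨L ∘ₗ A.mkQ, ?_, fun x hx => ?_⟩
  · rw [LinearMap.comp_assoc, ← Submodule.mapQ_mkQ _ _ _ (h := le_rfl), ← LinearMap.comp_assoc,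
      hL, LinearMap.id_comp]
  · simp [(Submodule.Quotient.mk_eq_zero A).2 hx]

theorem Submodule.exists_comp_subtype_eq_mkQ_map_projectionOnto {W W' : Submodule F E}
    (h : IsCompl W W') (A : Submodule F E) :
    ∃ G : E →ₗ[F] W ⧸ A.map (W.projectionOnto W' h),
      G ∘ₗ W.subtype = (A.map (W.projectionOnto W' h)).mkQ ∧ A ≤ LinearMap.ker G ∧
        W' ≤ LinearMap.ker G := by
  refine ⟨(A.map (W.projectionOnto W' h)).mkQ ∘ₗ W.projectionOnto W' h, ?_, fun x hx => ?_,
    fun x hx => ?_⟩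
  · rw [LinearMap.comp_assoc, Submodule.projectionOnto_comp_subtype, LinearMap.comp_id]
  · exact (Submodule.Quotient.mk_eq_zero _).2 (Submodule.mem_map_of_mem hx)
  · simp [Submodule.projectionOnto_apply_of_mem_right h hx]

theorem Submodule.finrank_map_projectionOnto_add_finrank_comap {W W' : Submodule F E}
    (h : IsCompl W W') (A : Submodule F E) [FiniteDimensional F A] :
    Module.finrank F (A.map (W.projectionOnto W' h)) + Module.finrank F (A.comap W'.subtype) =
      Module.finrank F A := by
  have := LinearMap.finrank_range_add_finrank_ker ((W.projectionOnto W' h).domRestrict A)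
  rw [LinearMap.range_domRestrict, LinearMap.ker_domRestrict, Submodule.ker_projectionOnto,
    ← Submodule.finrank_map_subtype_eq A, Submodule.map_comap_subtype] at this
  rwa [← Submodule.finrank_map_subtype_eq _ (A.comap W'.subtype), Submodule.map_comap_subtype,
    inf_comm]

end

section

variable {F : Type*} [Field F] {d : ℕ} {V : Fin d → Type*}
  [∀ i, AddCommGroup (V i)] [∀ i, Module F (V i)]

variable (F) in
def sliceSpan (i : Fin d) (u : V i) : Submodule F (⨂[F] k, V k) :=
  Submodule.span F {t | ∃ v : ∀ k, V k, v i = u ∧ t = PiTensorProduct.tprod F v}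

theorem exists_sum_eq_of_mem_iSup_sliceSpan {κ : Type*} [Fintype κ] {T : ⨂[F] k, V k}
    (slot : κ → Fin d) (u : ∀ j, V (slot j)) (hT : T ∈ ⨆ j, sliceSpan F (slot j) (u j)) :
    ∃ S : Fin (Fintype.card κ) → ⨂[F] k, V k,
      (∀ j, ∃ i u, S j ∈ sliceSpan F i u) ∧ T = ∑ j, S j := by
  obtain ⟨S, hS, rfl⟩ := (Submodule.mem_iSup_iff_exists_finsupp _ _).1 hT
  refine ⟨S ∘ (Fintype.equivFin κ).symm, fun j => ⟨_, _, hS _⟩, ?_⟩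
  rw [Finsupp.sum_fintype _ _ fun _ => rfl]
  exact (Equiv.sum_comp _ _).symm

theorem tensorSliceRank_le_card {κ : Type*} [Fintype κ] {T : ⨂[F] k, V k}
    (slot : κ → Fin d) (u : ∀ j, V (slot j)) (hT : T ∈ ⨆ j, sliceSpan F (slot j) (u j)) :
    tensorSliceRank F V T ≤ Fintype.card κ :=
  Nat.sInf_le (exists_sum_eq_of_mem_iSup_sliceSpan slot u hT)

theorem exists_tensorSliceRank_mem_iSup_sliceSpan {κ : Type*} [Fintype κ] {T : ⨂[F] k, V k}
    (slot : κ → Fin d) (u : ∀ j, V (slot j)) (hT : T ∈ ⨆ j, sliceSpan F (slot j) (u j)) :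
    ∃ (slot' : Fin (tensorSliceRank F V T) → Fin d) (u' : ∀ j, V (slot' j)),
      T ∈ ⨆ j, sliceSpan F (slot' j) (u' j) := by
  obtain ⟨S, hS, hTS⟩ := Nat.sInf_mem
    (s := {r | ∃ S : Fin r → ⨂[F] k, V k,
      (∀ j, ∃ i u, S j ∈ sliceSpan F i u) ∧ T = ∑ j, S j})
    ⟨_, exists_sum_eq_of_mem_iSup_sliceSpan slot u hT⟩
  choose slot' u' hu' using hS
  exact ⟨slot', u', (congrArg (· ∈ ⨆ j, sliceSpan F (slot' j) (u' j)) hTS).mpr <|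
    Submodule.sum_mem _ fun j _ => Submodule.mem_iSup_of_mem j (hu' j)⟩

theorem tprod_mem_iSup_sliceSpan_finBasis (A : ∀ i, Submodule F (V i))
    [∀ i, FiniteDimensional F (A i)] {v : ∀ k, V k} {i : Fin d} (hv : v i ∈ A i) :
    PiTensorProduct.tprod F v ∈ ⨆ p : (i : Fin d) × Fin (Module.finrank F (A i)),
      sliceSpan F p.1 (Module.finBasis F (A p.1) p.2 : V p.1) := by
  set b := Module.finBasis F (A i)
  have hvi : v i = ∑ m, b.repr ⟨v i, hv⟩ m • (b m : V i) := by
    have := congrArg (A i).subtype (b.sum_repr ⟨v i, hv⟩)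
    rw [map_sum] at this
    simpa only [map_smul, Submodule.subtype_apply] using this.symm
  rw [← Function.update_eq_self i v, hvi, MultilinearMap.map_update_sum]
  refine Submodule.sum_mem _ fun m _ => ?_
  rw [MultilinearMap.map_update_smul]
  exact Submodule.smul_mem _ _ <| Submodule.mem_iSup_of_mem ⟨i, m⟩ <|
    Submodule.subset_span ⟨_, Function.update_self .., rfl⟩

theorem mem_iSup_sliceSpan_of_map_mkQ_eq_zero (A : ∀ i, Submodule F (V i))
    [∀ i, FiniteDimensional F (A i)] {T : ⨂[F] k, V k}
    (hT : PiTensorProduct.map (fun i => (A i).mkQ) T = 0) :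
    T ∈ ⨆ p : (i : Fin d) × Fin (Module.finrank F (A i)),
      sliceSpan F p.1 (Module.finBasis F (A p.1) p.2 : V p.1) := by
  -- Expand `id = s ∘ mkQ + P` multilinearly: the term with `s ∘ mkQ` in every slot kills `T`,
  -- every other term has a slot where `P` lands in `A i`.
  choose s hs using fun i => (A i).mkQ.exists_rightInverse_of_surjective (A i).range_mkQ
  set P : ∀ i, V i →ₗ[F] V i := fun i => LinearMap.id - s i ∘ₗ (A i).mkQ
  have hP : ∀ i x, P i x ∈ A i := fun i x => by
    rw [← Submodule.Quotient.mk_eq_zero, ← Submodule.mkQ_apply]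
    simpa [P] using sub_eq_zero.2 (LinearMap.congr_fun (hs i) ((A i).mkQ x)).symm
  have hid : T = PiTensorProduct.mapMultilinear F V V ((fun i => s i ∘ₗ (A i).mkQ) + P) T := by
    simp [P, Pi.add_def, PiTensorProduct.map_id]
  rw [hid, MultilinearMap.map_add_univ, LinearMap.sum_apply]
  refine Submodule.sum_mem _ fun S _ => ?_
  by_cases hS : S = Finset.univ
  · rw [hS, Finset.piecewise_univ, PiTensorProduct.mapMultilinear_apply,
      PiTensorProduct.map_comp, LinearMap.comp_apply, hT, map_zero]
    exact zero_mem _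
  obtain ⟨i, hi⟩ : ∃ i, i ∉ S := by simpa [Finset.eq_univ_iff_forall] using hS
  rw [PiTensorProduct.mapMultilinear_apply]
  refine Submodule.span_le.2 ?_
    ((PiTensorProduct.map_range_eq_span_tprod _).le (LinearMap.mem_range_self _ T))
  rintro _ ⟨v, rfl⟩
  refine tprod_mem_iSup_sliceSpan_finBasis A (i := i) ?_
  rw [Finset.piecewise_eq_of_notMem _ _ _ hi]
  exact hP i (v i)

theorem exists_map_mkQ_eq_zero_of_mem_iSup_sliceSpan {κ : Type*} [Fintype κ]
    {T : ⨂[F] k, V k} (slot : κ → Fin d) (u : ∀ j, V (slot j))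
    (hT : T ∈ ⨆ j, sliceSpan F (slot j) (u j)) :
    ∃ A : ∀ i, Submodule F (V i), ∑ i, Module.finrank F (A i) ≤ Fintype.card κ ∧
      PiTensorProduct.map (fun i => (A i).mkQ) T = 0 := by
  set A : ∀ i, Submodule F (V i) := fun i =>
    Submodule.span F (Set.range fun j : {j // slot j = i} => (j.2 ▸ u j : V i))
  refine ⟨A, ?_, ?_⟩
  · calc ∑ i, Module.finrank F (A i) ≤ ∑ i, Fintype.card {j // slot j = i} :=
          Finset.sum_le_sum fun i _ => finrank_range_le_card _
      _ = Fintype.card κ := by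
          rw [← Fintype.card_sigma, Fintype.card_congr (Equiv.sigmaFiberEquiv slot)]
  · refine (iSup_le fun j => Submodule.span_le.2 ?_ : _ ≤ LinearMap.ker _) hT
    rintro _ ⟨v, hv, rfl⟩
    refine (PiTensorProduct.map_tprod _ v).trans (MultilinearMap.map_coord_zero _ (slot j) ?_)
    rw [Submodule.mkQ_apply, Submodule.Quotient.mk_eq_zero, hv]
    exact Submodule.subset_span ⟨⟨j, rfl⟩, rfl⟩

theorem tensorSliceRank_le_sum_finrank (A : ∀ i, Submodule F (V i))
    [∀ i, FiniteDimensional F (A i)] {T : ⨂[F] k, V k}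
    (hT : PiTensorProduct.map (fun i => (A i).mkQ) T = 0) :
    tensorSliceRank F V T ≤ ∑ i, Module.finrank F (A i) := by
  simpa using tensorSliceRank_le_card _ _ (mem_iSup_sliceSpan_of_map_mkQ_eq_zero A hT)

theorem exists_sum_finrank_le_tensorSliceRank [∀ i, FiniteDimensional F (V i)] (hd : 0 < d)
    (T : ⨂[F] k, V k) :
    ∃ A : ∀ i, Submodule F (V i), ∑ i, Module.finrank F (A i) ≤ tensorSliceRank F V T ∧
      PiTensorProduct.map (fun i => (A i).mkQ) T = 0 := by
  have hT : PiTensorProduct.map (fun i => (⊤ : Submodule F (V i)).mkQ) T = 0 := by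
    rw [← PiTensorProduct.mapMultilinear_apply, MultilinearMap.map_coord_zero _ ⟨0, hd⟩
      (Subsingleton.elim _ _), LinearMap.zero_apply]
  obtain ⟨slot, u, h⟩ :=
    exists_tensorSliceRank_mem_iSup_sliceSpan _ _ (mem_iSup_sliceSpan_of_map_mkQ_eq_zero _ hT)
  simpa using exists_map_mkQ_eq_zero_of_mem_iSup_sliceSpan slot u h

theorem PiTensorProduct.map_eq_zero_of_map_mkQ_eq_zero {U : Fin d → Type*}
    [∀ i, AddCommGroup (U i)] [∀ i, Module F (U i)] (A : ∀ i, Submodule F (V i))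
    (f : ∀ i, V i →ₗ[F] U i) (hf : ∀ i, A i ≤ LinearMap.ker (f i)) {T : ⨂[F] k, V k}
    (hT : PiTensorProduct.map (fun i => (A i).mkQ) T = 0) : PiTensorProduct.map f T = 0 := by
  rw [show f = fun i => (A i).liftQ (f i) (hf i) ∘ₗ (A i).mkQ from
    funext fun i => ((A i).liftQ_mkQ _ _).symm, PiTensorProduct.map_comp, LinearMap.comp_apply,
    hT, map_zero]

theorem tensorSliceRank_add_le [∀ i, FiniteDimensional F (V i)] (hd : 0 < d)
    (T T' : ⨂[F] k, V k) :
    tensorSliceRank F V (T + T') ≤ tensorSliceRank F V T + tensorSliceRank F V T' := by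
  obtain ⟨A, hA, hAT⟩ := exists_sum_finrank_le_tensorSliceRank hd T
  obtain ⟨A', hA', hAT'⟩ := exists_sum_finrank_le_tensorSliceRank hd T'
  have hsup : ∀ {B : ∀ i, Submodule F (V i)} {X : ⨂[F] k, V k},
      (∀ i, B i ≤ A i ⊔ A' i) →
      PiTensorProduct.map (fun i => (B i).mkQ) X = 0 →
      PiTensorProduct.map (fun i => (A i ⊔ A' i).mkQ) X = 0 := fun hB hX =>
    PiTensorProduct.map_eq_zero_of_map_mkQ_eq_zero _ _
      (fun i => by rw [Submodule.ker_mkQ]; exact hB i) hX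
  calc tensorSliceRank F V (T + T') ≤ ∑ i, Module.finrank F ↥(A i ⊔ A' i) := by
        refine tensorSliceRank_le_sum_finrank _ ?_
        rw [map_add, hsup (fun _ => le_sup_left) hAT, hsup (fun _ => le_sup_right) hAT', add_zero]
    _ ≤ ∑ i, (Module.finrank F (A i) + Module.finrank F (A' i)) :=
        Finset.sum_le_sum fun i _ => Submodule.finrank_add_le_finrank_add_finrank _ _
    _ ≤ tensorSliceRank F V T + tensorSliceRank F V T' := by
        rw [Finset.sum_add_distrib]
        exact add_le_add hA hA'

theorem tensorSliceRank_map_le {U : Fin d → Type*} [∀ i, AddCommGroup (U i)]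
    [∀ i, Module F (U i)] [∀ i, FiniteDimensional F (U i)] (hd : 0 < d)
    (f : ∀ i, U i →ₗ[F] V i) (T : ⨂[F] k, U k) :
    tensorSliceRank F V (PiTensorProduct.map f T) ≤ tensorSliceRank F U T := by
  obtain ⟨A, hA, hAT⟩ := exists_sum_finrank_le_tensorSliceRank hd T
  calc tensorSliceRank F V (PiTensorProduct.map f T)
        ≤ ∑ i, Module.finrank F ((A i).map (f i)) := by
        refine tensorSliceRank_le_sum_finrank _ ?_
        rw [← LinearMap.comp_apply, ← PiTensorProduct.map_comp]
        refine PiTensorProduct.map_eq_zero_of_map_mkQ_eq_zero A _ (fun i => ?_) hAT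
        rw [LinearMap.ker_comp, Submodule.ker_mkQ]
        exact Submodule.le_comap_map _ _
    _ ≤ ∑ i, Module.finrank F (A i) :=
        Finset.sum_le_sum fun i _ => Submodule.finrank_map_le _ _
    _ ≤ tensorSliceRank F U T := hA

theorem PiTensorProduct.map_mkQ_eq_zero_of_map_mkQ_add_eq_zero
    {W W' A : ∀ i, Submodule F (V i)} {B : ∀ i, Submodule F (W i)}
    (G : ∀ i, V i →ₗ[F] W i ⧸ B i) (hGW : ∀ i, G i ∘ₗ (W i).subtype = (B i).mkQ)
    (hGA : ∀ i, A i ≤ LinearMap.ker (G i)) {s : Fin d} (hGW' : W' s ≤ LinearMap.ker (G s))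
    {T : ⨂[F] k, W k} {T' : ⨂[F] k, W' k}
    (h : PiTensorProduct.map (fun i => (A i).mkQ)
      (PiTensorProduct.map (fun i => (W i).subtype) T +
        PiTensorProduct.map (fun i => (W' i).subtype) T') = 0) :
    PiTensorProduct.map (fun i => (B i).mkQ) T = 0 := by
  have hT' : PiTensorProduct.map G (PiTensorProduct.map (fun i => (W' i).subtype) T') = 0 := by
    rw [← LinearMap.comp_apply, ← PiTensorProduct.map_comp,
      ← PiTensorProduct.mapMultilinear_apply, MultilinearMap.map_coord_zero _ s,
      LinearMap.zero_apply]
    exact LinearMap.ext fun x => hGW' x.2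
  calc PiTensorProduct.map (fun i => (B i).mkQ) T
      = PiTensorProduct.map G (PiTensorProduct.map (fun i => (W i).subtype) T) := by
        rw [← LinearMap.comp_apply, ← PiTensorProduct.map_comp]
        simp only [hGW]
    _ = PiTensorProduct.map G (PiTensorProduct.map (fun i => (W i).subtype) T +
          PiTensorProduct.map (fun i => (W' i).subtype) T') := by rw [map_add, hT', add_zero]
    _ = 0 := PiTensorProduct.map_eq_zero_of_map_mkQ_eq_zero A G hGA h

theorem PiTensorProduct.map_mkQ_eq_zero_of_isCompl {W W' A : ∀ i, Submodule F (V i)}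
    (hc : ∀ i, IsCompl (W i) (W' i)) (P : Fin d → Prop) [DecidablePred P] {s : Fin d}
    (hs : P s) {T : ⨂[F] k, W k} {T' : ⨂[F] k, W' k}
    (h : PiTensorProduct.map (fun i => (A i).mkQ)
      (PiTensorProduct.map (fun i => (W i).subtype) T +
        PiTensorProduct.map (fun i => (W' i).subtype) T') = 0) :
    PiTensorProduct.map (fun i => (if P i then (A i).map ((W i).projectionOnto (W' i) (hc i))
      else (A i).comap (W i).subtype).mkQ) T = 0 := by
  have hG : ∀ i, ∃ G : V i →ₗ[F] W i ⧸
      (if P i then (A i).map ((W i).projectionOnto (W' i) (hc i)) else (A i).comap (W i).subtype),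
      G ∘ₗ (W i).subtype = Submodule.mkQ _ ∧
        A i ≤ LinearMap.ker G ∧ (P i → W' i ≤ LinearMap.ker G) := fun i => by
    by_cases hi : P i
    · rw [if_pos hi]
      obtain ⟨G, hGW, hGA, hGW'⟩ :=
        Submodule.exists_comp_subtype_eq_mkQ_map_projectionOnto (hc i) (A i)
      exact ⟨G, hGW, hGA, fun _ => hGW'⟩
    · rw [if_neg hi]
      obtain ⟨G, hGW, hGA⟩ := Submodule.exists_comp_subtype_eq_mkQ_comap (W i) (A i)
      exact ⟨G, hGW, hGA, fun h => absurd h hi⟩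
  choose G hGW hGA hGW' using hG
  exact map_mkQ_eq_zero_of_map_mkQ_add_eq_zero G hGW hGA (hGW' s hs) h

theorem tensorSliceRank_add_le_tensorSliceRank_map_add_map [∀ i, FiniteDimensional F (V i)]
    (hd : 2 ≤ d) {W W' : ∀ i, Submodule F (V i)} (hc : ∀ i, IsCompl (W i) (W' i))
    (T : ⨂[F] k, W k) (T' : ⨂[F] k, W' k) :
    tensorSliceRank F (fun i => W i) T + tensorSliceRank F (fun i => W' i) T' ≤
      tensorSliceRank F V (PiTensorProduct.map (fun i => (W i).subtype) T +
        PiTensorProduct.map (fun i => (W' i).subtype) T') := by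
  obtain ⟨A, hA, hAT⟩ := exists_sum_finrank_le_tensorSliceRank (by omega)
    (PiTensorProduct.map (fun i => (W i).subtype) T +
      PiTensorProduct.map (fun i => (W' i).subtype) T')
  set s : Fin d := ⟨0, by omega⟩
  have hT := PiTensorProduct.map_mkQ_eq_zero_of_isCompl hc (· = s) rfl hAT
  have hT' := PiTensorProduct.map_mkQ_eq_zero_of_isCompl (fun i => (hc i).symm) (· ≠ s)
    (s := ⟨1, by omega⟩) (by simp [s, Fin.ext_iff]) (by rwa [add_comm] at hAT)
  refine (add_le_add (tensorSliceRank_le_sum_finrank _ hT)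
    (tensorSliceRank_le_sum_finrank _ hT')).trans (le_of_eq_of_le ?_ hA)
  rw [← Finset.sum_add_distrib]
  refine Finset.sum_congr rfl fun i _ => ?_
  by_cases hi : i = s
  · rw [if_pos hi, if_neg (not_not_intro hi), hi]
    exact Submodule.finrank_map_projectionOnto_add_finrank_comap (hc s) (A s)
  · rw [if_neg hi, if_pos hi, add_comm]
    exact Submodule.finrank_map_projectionOnto_add_finrank_comap (hc i).symm (A i)

end

theorem sliceRank_directSum (F : Type*) [Field F] {d : ℕ} (hd : 2 ≤ d)
    (V : Fin d → Type*)
    [∀ i, AddCommGroup (V i)] [∀ i, Module F (V i)] [∀ i, FiniteDimensional F (V i)]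
    (W₁ W₂ : ∀ i, Submodule F (V i)) (hcompl : ∀ i, IsCompl (W₁ i) (W₂ i))
    (T₁ : ⨂[F] i, (W₁ i)) (T₂ : ⨂[F] i, (W₂ i)) :
    tensorSliceRank F V
        (PiTensorProduct.map (fun i => (W₁ i).subtype) T₁ +
          PiTensorProduct.map (fun i => (W₂ i).subtype) T₂) =
      tensorSliceRank F (fun i => (W₁ i)) T₁ + tensorSliceRank F (fun i => (W₂ i)) T₂ := by
  have hd₀ : 0 < d := by omega
  exact le_antisymm
    ((tensorSliceRank_add_le hd₀ _ _).trans
      (add_le_add (tensorSliceRank_map_le hd₀ _ T₁) (tensorSliceRank_map_le hd₀ _ T₂)))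
    (tensorSliceRank_add_le_tensorSliceRank_map_add_map hd hcompl T₁ T₂)
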